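/- arXiv:2005.03259 — 3 statements merged into one kernel-verified Lean document; each statement's English description precedes it below -/
import Mathlib

section
/- Let G = (V, E) be a finite simple graph with V nonempty, and suppose (η, a) ∈ U^(1), (ζ, b) ∈ U^(−1), η + ζ = 0 and a + b = 0, and let n be the common size of the maximal cliques of G. If G contains a chordless odd cycle of length at least 5, then every chordless odd cycle of G of length at least 5 has length exactly 5, and n = 2. -/
variable {V : Type*}

/-- A stable (independent) set of a graph. -/
def IsStableSet (G : SimpleGraph V) (S : Set V) : Prop :=
  ∀ u ∈ S, ∀ v ∈ S, ¬ G.Adj u v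

/-- The vertex set of a cycle subgraph of `G`, given by an injective
parametrization `c : ZMod m → V` (`m ≥ 3`) with consecutive vertices adjacent. -/
def IsCycleSet (G : SimpleGraph V) (C : Set V) : Prop :=
  ∃ (m : ℕ) (c : ZMod m → V), 3 ≤ m ∧ Function.Injective c ∧
    (∀ i, G.Adj (c i) (c (i + 1))) ∧ C = Set.range c

/-- The vertex set of an odd cycle subgraph of `G`. -/
def IsOddCycleSet (G : SimpleGraph V) (C : Set V) : Prop :=
  ∃ (m : ℕ) (c : ZMod m → V), 3 ≤ m ∧ Odd m ∧ Function.Injective c ∧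
    (∀ i, G.Adj (c i) (c (i + 1))) ∧ C = Set.range c

/-- The vertex set of a chordless odd cycle subgraph of `G`: the only edges of `G`
between vertices of the cycle are the cycle edges. -/
def IsChordlessOddCycleSet (G : SimpleGraph V) (C : Set V) : Prop :=
  ∃ (m : ℕ) (c : ZMod m → V), 3 ≤ m ∧ Odd m ∧ Function.Injective c ∧
    (∀ i, G.Adj (c i) (c (i + 1))) ∧
    (∀ i j, G.Adj (c i) (c j) → j = i + 1 ∨ i = j + 1) ∧
    C = Set.range c

/-- A maximal clique of `G`. -/
def IsMaximalClique (G : SimpleGraph V) (K : Set V) : Prop :=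
  G.IsClique K ∧ ∀ K' : Set V, G.IsClique K' → K ⊆ K' → K = K'

/-- Membership in HSTAB(G). -/
def memHSTAB (G : SimpleGraph V) (f : V → ℝ) : Prop :=
  (∀ x, 0 ≤ f x) ∧
  (∀ K : Set V, G.IsClique K → (∑ᶠ v ∈ K, f v) ≤ 1) ∧
  (∀ C : Set V, IsOddCycleSet G C → (∑ᶠ v ∈ C, f v) ≤ ((C.ncard : ℝ) - 1) / 2)

/-- Membership in TSTAB(G). -/
def memTSTAB (G : SimpleGraph V) (f : V → ℝ) : Prop :=
  (∀ x, 0 ≤ f x ∧ f x ≤ 1) ∧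
  (∀ x y, G.Adj x y → f x + f y ≤ 1) ∧
  (∀ C : Set V, IsOddCycleSet G C → (∑ᶠ v ∈ C, f v) ≤ ((C.ncard : ℝ) - 1) / 2)

/-- Membership in QSTAB(G). -/
def memQSTAB (G : SimpleGraph V) (f : V → ℝ) : Prop :=
  (∀ x, 0 ≤ f x) ∧
  (∀ K : Set V, G.IsClique K → (∑ᶠ v ∈ K, f v) ≤ 1)

/-- The stable set polytope STAB(G). -/
def STAB (G : SimpleGraph V) : Set (V → ℝ) :=
  convexHull ℝ {f : V → ℝ | ∃ S : Set V, IsStableSet G S ∧ f = S.indicator 1}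

/-- The set `U^(n)` of the paper, as a predicate on pairs `(g, d)`. -/
def memU (G : SimpleGraph V) (n : ℤ) (g : V → ℤ) (d : ℤ) : Prop :=
  (∀ v, n ≤ g v) ∧
  (∀ K : Set V, IsMaximalClique G K → (∑ᶠ v ∈ K, g v) ≤ d - n) ∧
  (∀ C : Set V, IsChordlessOddCycleSet G C → 5 ≤ C.ncard →
    2 * (∑ᶠ v ∈ C, g v) ≤ d * ((C.ncard : ℤ) - 1) - 2 * n)

/-! Since `η ≥ 1` and `-η = ζ ≥ -1`, `η` is constantly `1` and every inequality defining
`U^(1)` is tight. On a chordless odd cycle of length `m ≥ 5` this reads `(a - 2)(m - 1) = 4`,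
forcing `m = 5` and `a = 3`; on a maximal clique it reads `n = a - 1 = 2`. -/

lemma finsum_mem_const_eq_ncard_mul [Finite V] (s : Set V) (k : ℤ) :
    ∑ᶠ _ ∈ s, k = s.ncard * k := by
  rw [finsum_mem_eq_finite_toFinset_sum _ (Set.toFinite s), Finset.sum_const,
    Set.ncard_eq_toFinset_card _ (Set.toFinite s), nsmul_eq_mul]

lemma exists_isMaximalClique_superset [Finite V] {G : SimpleGraph V} {K : Set V}
    (hK : G.IsClique K) : ∃ M, IsMaximalClique G M ∧ K ⊆ M := by
  obtain ⟨M, ⟨hMc, hKM⟩, hmax⟩ := Set.Finite.exists_maximalFor (fun s : Set V => s.ncard)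
    {K' | G.IsClique K' ∧ K ⊆ K'} (Set.toFinite _) ⟨K, hK, subset_rfl⟩
  refine ⟨M, ⟨hMc, fun K' hK' hMK' => ?_⟩, hKM⟩
  exact Set.eq_of_subset_of_ncard_le hMK'
    (hmax ⟨hK', hKM.trans hMK'⟩ (Set.ncard_le_ncard hMK' (Set.toFinite _))) (Set.toFinite _)

lemma Int.eq_five_and_eq_three_of_two_mul_eq {m a : ℤ} (hm : 5 ≤ m)
    (h : 2 * m = a * (m - 1) - 2) : m = 5 ∧ a = 3 := by
  have hprod : (a - 2) * (m - 1) = 4 := by linarith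
  have ha : 1 ≤ a - 2 := by nlinarith
  have hm' : m - 1 ≤ 4 := by nlinarith
  have hm5 : m = 5 := by omega
  subst hm5
  omega

namespace memU

variable {G : SimpleGraph V} {n d : ℤ} {g : V → ℤ}

lemma eq_const {e : ℤ} (hg : memU G n g d) (hg' : memU G (-n) (-g) e) (v : V) : g v = n :=
  le_antisymm (by simpa using hg'.1 v) (hg.1 v)

variable [Finite V]

lemma finsum_clique_eq (hg : memU G n g d) (hg' : memU G (-n) (-g) (-d)) {K : Set V}
    (hK : IsMaximalClique G K) : ∑ᶠ v ∈ K, g v = d - n := by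
  have h := hg'.2.1 K hK
  rw [Pi.neg_def, finsum_mem_neg_distrib _ (Set.toFinite K)] at h
  linarith [hg.2.1 K hK]

lemma two_mul_finsum_cycle_eq (hg : memU G n g d) (hg' : memU G (-n) (-g) (-d)) {C : Set V}
    (hC : IsChordlessOddCycleSet G C) (h5 : 5 ≤ C.ncard) :
    2 * ∑ᶠ v ∈ C, g v = d * (C.ncard - 1) - 2 * n := by
  have h := hg'.2.2 C hC h5
  rw [Pi.neg_def, finsum_mem_neg_distrib _ (Set.toFinite C)] at h
  linarith [hg.2.2 C hC h5]

end memU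

/-- under the hypotheses of Statement 6, with `n` the common
size of maximal cliques, if `G` contains a chordless odd cycle of length at
least 5, then all such cycles have length exactly 5 and `n = 2`. -/
theorem stmt7 {V : Type*} [Fintype V] [Nonempty V] (G : SimpleGraph V)
    (η ζ : V → ℤ) (a b : ℤ) (n : ℕ)
    (hη : memU G 1 η a) (hζ : memU G (-1) ζ b)
    (hsum : η + ζ = 0) (hab : a + b = 0)
    (hn : ∀ K : Set V, IsMaximalClique G K → K.ncard = n)
    (hC : ∃ C : Set V, IsChordlessOddCycleSet G C ∧ 5 ≤ C.ncard) :
    (∀ C : Set V, IsChordlessOddCycleSet G C → 5 ≤ C.ncard → C.ncard = 5) ∧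
    n = 2 := by
  obtain rfl := eq_neg_of_add_eq_zero_right hsum
  obtain rfl := eq_neg_of_add_eq_zero_right hab
  have hsum_eq_ncard (S : Set V) : ∑ᶠ v ∈ S, η v = S.ncard := by
    rw [finsum_mem_congr rfl fun v _ => hη.eq_const hζ v, finsum_mem_const_eq_ncard_mul, mul_one]
  have hcycle {C : Set V} (hC : IsChordlessOddCycleSet G C) (h5 : 5 ≤ C.ncard) :
      (C.ncard : ℤ) = 5 ∧ a = 3 := by
    have h := hη.two_mul_finsum_cycle_eq hζ hC h5
    rw [hsum_eq_ncard] at h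
    exact Int.eq_five_and_eq_three_of_two_mul_eq (by exact_mod_cast h5) (by linarith)
  obtain ⟨C₀, hC₀, h5⟩ := hC
  obtain ⟨M, hM, -⟩ :=
    exists_isMaximalClique_superset (G.isClique_singleton (Classical.arbitrary V))
  have hMa := hη.finsum_clique_eq hζ hM
  rw [hsum_eq_ncard, hn M hM, (hcycle hC₀ h5).2] at hMa
  exact ⟨fun C hC h5 => by exact_mod_cast (hcycle hC h5).1, by omega⟩
end

section
/- Let G be the graph on the 21 vertices {x_i, y_i, z_i : i ∈ ℤ/7ℤ} with edges {x_i, x_{i+1}}, {x_i, y_i}, {y_i, z_i}, {z_i, y_{i+1}}, {z_i, z_{i+3}} (indices modulo 7), and set X = {x_i}, Z = {z_i} and C_i = {x_i, y_i, z_i, y_{i+1}, x_{i+1}} for i ∈ ℤ/7ℤ. Then there is no stable set S of G with |S ∩ X| = 3, |S ∩ Z| = 3, and |S ∩ C_i| = 2 for every i ∈ ℤ/7ℤ. -/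
variable {V : Type*}

/-- The 21 vertices `x_i, y_i, z_i`, `i ∈ ℤ/7ℤ`. -/
inductive Vtx : Type
  | x : ZMod 7 → Vtx
  | y : ZMod 7 → Vtx
  | z : ZMod 7 → Vtx
  deriving DecidableEq, Fintype

/-- The oriented edge relation of the example graph. -/
def paperRel : Vtx → Vtx → Prop := fun u v =>
  (∃ i, u = Vtx.x i ∧ v = Vtx.x (i + 1)) ∨
  (∃ i, u = Vtx.x i ∧ v = Vtx.y i) ∨
  (∃ i, u = Vtx.y i ∧ v = Vtx.z i) ∨
  (∃ i, u = Vtx.z i ∧ v = Vtx.y (i + 1)) ∨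
  (∃ i, u = Vtx.z i ∧ v = Vtx.z (i + 3))

instance : DecidableRel paperRel := fun u v => by
  unfold paperRel; infer_instance

/-- The example graph of the paper. -/
def paperGraph : SimpleGraph Vtx where
  Adj u v := paperRel u v ∨ paperRel v u
  symm := ⟨fun _ _ h => Or.symm h⟩
  loopless := ⟨by
    show ∀ a, ¬(paperRel a a ∨ paperRel a a)
    decide⟩

/-- The set `X = {x_i}`. -/
def Xset : Set Vtx := Set.range Vtx.x
/-- The set `Y = {y_i}`. -/
def Yset : Set Vtx := Set.range Vtx.y
/-- The set `Z = {z_i}`. -/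
def Zset : Set Vtx := Set.range Vtx.z

/-!
Each `x_i` and each `y_i` lies in exactly two of the sets `C_i`, each `z_i` in exactly one.
Summing `|S ∩ C_i| = 2` over the seven `i` therefore gives
`14 = 2 |S ∩ X| + 2 |S ∩ Y| + |S ∩ Z| = 9 + 2 |S ∩ Y|`, which is impossible by parity.
-/

theorem Set.ncard_inter_coe_finset_eq_sum_indicator {α : Type*} (S : Set α) (F : Finset α) :
    (S ∩ ↑F).ncard = ∑ v ∈ F, S.indicator 1 v := by
  classical
  have hfilter : S ∩ ↑F = ↑(F.filter (· ∈ S)) := by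
    ext v; simp [and_comm]
  rw [hfilter, Set.ncard_coe_finset, Finset.card_filter]
  simp only [Set.indicator_apply, Pi.one_apply]

theorem Set.ncard_inter_range_eq_sum_indicator {α ι : Type*} [Fintype ι] {f : ι → α}
    (hf : Function.Injective f) (S : Set α) :
    (S ∩ Set.range f).ncard = ∑ i, S.indicator 1 (f i) := by
  have hrange : Set.range f = ↑(Finset.univ.map ⟨f, hf⟩) := by simp
  rw [hrange, S.ncard_inter_coe_finset_eq_sum_indicator, Finset.sum_map]
  rfl

theorem sum_comp_add_right {G M : Type*} [AddGroup G] [Fintype G] [AddCommMonoid M]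
    (a : G) (g : G → M) : ∑ i, g (i + a) = ∑ i, g i :=
  Equiv.sum_comp (Equiv.addRight a) g

def Cset (i : ZMod 7) : Set Vtx := {Vtx.x i, Vtx.y i, Vtx.z i, Vtx.y (i + 1), Vtx.x (i + 1)}

theorem ncard_inter_Cset (S : Set Vtx) (i : ZMod 7) :
    (S ∩ Cset i).ncard = S.indicator 1 (Vtx.x i) + S.indicator 1 (Vtx.y i) +
      S.indicator 1 (Vtx.z i) + S.indicator 1 (Vtx.y (i + 1)) + S.indicator 1 (Vtx.x (i + 1)) := by
  have hnodup :
      ∀ i : ZMod 7, [Vtx.x i, Vtx.y i, Vtx.z i, Vtx.y (i + 1), Vtx.x (i + 1)].Nodup := by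
    decide
  have hC : Cset i = ↑[Vtx.x i, Vtx.y i, Vtx.z i, Vtx.y (i + 1), Vtx.x (i + 1)].toFinset := by
    ext v; simp [Cset]
  rw [hC, S.ncard_inter_coe_finset_eq_sum_indicator, List.sum_toFinset _ (hnodup i)]
  simp only [List.map_cons, List.map_nil, List.sum_cons, List.sum_nil]
  ring

theorem sum_ncard_inter_Cset (S : Set Vtx) :
    ∑ i, (S ∩ Cset i).ncard =
      2 * (S ∩ Xset).ncard + 2 * (S ∩ Yset).ncard + (S ∩ Zset).ncard := by
  have hx : Function.Injective Vtx.x := fun _ _ h => Vtx.x.inj h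
  have hy : Function.Injective Vtx.y := fun _ _ h => Vtx.y.inj h
  have hz : Function.Injective Vtx.z := fun _ _ h => Vtx.z.inj h
  simp only [ncard_inter_Cset, Finset.sum_add_distrib, Xset, Yset, Zset,
    S.ncard_inter_range_eq_sum_indicator hx, S.ncard_inter_range_eq_sum_indicator hy,
    S.ncard_inter_range_eq_sum_indicator hz,
    sum_comp_add_right 1 (fun i => S.indicator 1 (Vtx.x i)),
    sum_comp_add_right 1 (fun i => S.indicator 1 (Vtx.y i))]
  ring

/-- there is no stable set `S` of the example graph with
`|S ∩ X| = 3`, `|S ∩ Z| = 3` and `|S ∩ C_i| = 2` for every `i`. -/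
theorem stmt16 : ¬ ∃ S : Set Vtx, IsStableSet paperGraph S ∧
    (S ∩ Xset).ncard = 3 ∧ (S ∩ Zset).ncard = 3 ∧
    ∀ i : ZMod 7,
      (S ∩ {Vtx.x i, Vtx.y i, Vtx.z i, Vtx.y (i + 1), Vtx.x (i + 1)}).ncard = 2 := by
  rintro ⟨S, -, hX, hZ, hC⟩
  have hcount := sum_ncard_inter_Cset S
  simp only [Cset, hC, hX, hZ, Finset.sum_const, Finset.card_univ, ZMod.card, smul_eq_mul] at hcount
  omega
end

section
/- Let G be the graph on the 21 vertices {x_i, y_i, z_i : i ∈ ℤ/7ℤ} with edges {x_i, x_{i+1}}, {x_i, y_i}, {y_i, z_i}, {z_i, y_{i+1}}, {z_i, z_{i+3}} (indices modulo 7). Define ν : V → ℝ by ν(x_i) = ν(z_i) = 3/7 and ν(y_i) = 5/14 for all i. Then ν ∉ STAB(G), i.e., ν is not in the convex hull of the characteristic vectors of the stable sets of G. -/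
variable {V : Type*}

/-- The function `ν` with `ν(x_i) = ν(z_i) = 3/7`, `ν(y_i) = 5/14`. -/
noncomputable def nuPaper : Vtx → ℝ
  | Vtx.x _ => 3 / 7
  | Vtx.y _ => 5 / 14
  | Vtx.z _ => 3 / 7

/-!
The weights of `ν` add up to `7 · (3/7 + 5/14 + 3/7) = 17/2`, while every stable set of `G` has at
most `8` vertices, and the linear inequality `∑ f ≤ 8` passes from stable sets to their convex hull.
The bound `8` comes from odd cycles: a stable set meets a cycle of length `n` in at most `⌊n/2⌋`
vertices. The seven 5-cycles `x_i x_{i+1} y_{i+1} z_i y_i` cover every `x_i` and `y_i` twice and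
every `z_i` once, and the `z_i` form the 7-cycle `z_0 z_3 z_6 …`; so `2|S| ≤ 7 · 2 + 3`.
-/

open Finset

section StableSet

variable {G : SimpleGraph V} {S : Set V}

theorem IsStableSet.two_mul_sum_indicator_le {n : ℕ} [NeZero n] (hS : IsStableSet G S)
    (c : ZMod n → V) (hc : ∀ j, G.Adj (c j) (c (j + 1))) :
    2 * ∑ j, S.indicator (1 : V → ℕ) (c j) ≤ n := by
  classical
  set s : Finset (ZMod n) := {j | c j ∈ S}
  -- `s` and its shift `s + 1` are disjoint, since `j, j + 1 ∈ s` would be adjacent in `S`.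
  have hdisj : Disjoint s (s.map (addRightEmbedding 1)) := by
    refine disjoint_left.mpr fun j hj hj' => ?_
    obtain ⟨i, hi, rfl⟩ := mem_map.mp hj'
    exact hS _ (mem_filter.mp hi).2 _ (mem_filter.mp hj).2 (hc i)
  have hcount : ∑ j, S.indicator (1 : V → ℕ) (c j) = #s := by
    simp only [Set.indicator_apply, Pi.one_apply, sum_boole, Nat.cast_id, s]
  calc 2 * ∑ j, S.indicator (1 : V → ℕ) (c j) = #(s ∪ s.map (addRightEmbedding 1)) := by
        rw [card_union_of_disjoint hdisj, card_map, hcount, two_mul]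
    _ ≤ Fintype.card (ZMod n) := card_le_univ _
    _ = n := ZMod.card n

theorem sum_le_of_mem_STAB [Fintype V] {k : ℝ}
    (hk : ∀ S, IsStableSet G S → ∑ v, S.indicator (1 : V → ℝ) v ≤ k) {f : V → ℝ}
    (hf : f ∈ STAB G) : ∑ v, f v ≤ k := by
  have hlin : IsLinearMap ℝ (fun f : V → ℝ => ∑ v, f v) :=
    ⟨fun _ _ => sum_add_distrib, fun _ _ => (mul_sum _ _ _).symm⟩
  refine convexHull_min ?_ (convex_halfSpace_le hlin k) hf
  rintro _ ⟨S, hS, rfl⟩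
  exact hk S hS

end StableSet

namespace Vtx

def equivSum : Vtx ≃ ZMod 7 ⊕ ZMod 7 ⊕ ZMod 7 where
  toFun
    | x i => .inl i
    | y i => .inr (.inl i)
    | z i => .inr (.inr i)
  invFun
    | .inl i => x i
    | .inr (.inl i) => y i
    | .inr (.inr i) => z i
  left_inv v := by cases v <;> rfl
  right_inv s := by rcases s with _ | _ | _ <;> rfl

theorem sum_univ {M : Type*} [AddCommMonoid M] (f : Vtx → M) :
    ∑ v, f v = ∑ i, f (x i) + ∑ i, f (y i) + ∑ i, f (z i) := by
  rw [← equivSum.symm.sum_comp, Fintype.sum_sum_type, Fintype.sum_sum_type, add_assoc]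
  rfl

end Vtx

open Vtx

instance : DecidableRel paperGraph.Adj := fun u v =>
  inferInstanceAs (Decidable (paperRel u v ∨ paperRel v u))

def pentagon (i : ZMod 7) : ZMod 5 → Vtx := ![x i, x (i + 1), y (i + 1), z i, y i]

def heptagon (j : ZMod 7) : Vtx := z (3 * j)

theorem pentagon_adj : ∀ i j, paperGraph.Adj (pentagon i j) (pentagon i (j + 1)) := by decide

theorem heptagon_adj : ∀ j, paperGraph.Adj (heptagon j) (heptagon (j + 1)) := by decide

theorem paperGraph_sum_indicator_le_eight {S : Set Vtx} (hS : IsStableSet paperGraph S) :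
    ∑ v, S.indicator (1 : Vtx → ℕ) v ≤ 8 := by
  set f := S.indicator (1 : Vtx → ℕ)
  have hpent (i : ZMod 7) : f (x i) + f (x (i + 1)) + f (y (i + 1)) + f (z i) + f (y i) ≤ 2 := by
    have h : 2 * ∑ j, f (pentagon i j) ≤ 5 := hS.two_mul_sum_indicator_le _ (pentagon_adj i)
    have hsum : ∑ j, f (pentagon i j) =
        f (x i) + f (x (i + 1)) + f (y (i + 1)) + f (z i) + f (y i) := Fin.sum_univ_five _
    omega
  have hhept : ∑ i, f (z i) ≤ 3 := by
    have h : 2 * ∑ j, f (heptagon j) ≤ 7 := hS.two_mul_sum_indicator_le _ heptagon_adj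
    have hsum : ∑ j, f (heptagon j) = ∑ i, f (z i) :=
      Fintype.sum_bijective (3 * ·) (by decide) _ _ fun _ => rfl
    omega
  have hshift (g : ZMod 7 → ℕ) : ∑ i, g (i + 1) = ∑ i, g i := Equiv.sum_comp (Equiv.addRight 1) g
  have h14 := sum_le_sum fun i (_ : i ∈ univ) => hpent i
  simp only [sum_add_distrib, hshift fun i => f (x i), hshift fun i => f (y i),
    sum_const, card_univ, ZMod.card, smul_eq_mul] at h14
  rw [Vtx.sum_univ]
  omega

/-- `ν ∉ STAB(G)` for the example graph. -/
theorem stmt17 : nuPaper ∉ STAB paperGraph := by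
  intro h
  have h8 : ∑ v, nuPaper v ≤ 8 := by
    refine sum_le_of_mem_STAB (fun S hS => ?_) h
    have hcast (v : Vtx) : S.indicator (1 : Vtx → ℝ) v = S.indicator (1 : Vtx → ℕ) v := by
      by_cases hv : v ∈ S <;> simp [hv]
    simp only [hcast]
    exact_mod_cast paperGraph_sum_indicator_le_eight hS
  rw [Vtx.sum_univ] at h8
  norm_num [nuPaper] at h8
end
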